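/- Let Λ ⊆ ℤⁿ be an antichain lattice and A ⊆ ℤⁿ a generic Λ-finite set. There exists T > 1 such that for every real t ≥ T the following holds: if F is a nonempty proper exposed face of P_t(A) and the set σ = {α ∈ A : E_t(α) ∈ F} is nonempty and finite, then for every α ∈ A there exists a coordinate index j with αⱼ ≥ (∨σ)ⱼ. -/

import Mathlib

/-- `Dom α β` means `α ≪ β`: componentwise strict domination. -/
def Dom {n : ℕ} (α β : Fin n → ℤ) : Prop := ∀ i, α i < β i

/-- `vee B` is the componentwise maximum `∨B` of a finite set `B ⊆ ℤⁿ`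
(junk value `0` in a component if `B` is empty). -/
def vee {n : ℕ} (B : Finset (Fin n → ℤ)) : Fin n → ℤ :=
  fun i => WithBot.unbotD 0 ((B.image fun α => α i).max)

/-- `B` is neighborly in `A`: `B` is a nonempty finite subset of `A` and
no `α ∈ A` satisfies `α ≪ ∨B`. -/
def Neighborly {n : ℕ} (A : Set (Fin n → ℤ)) (B : Finset (Fin n → ℤ)) : Prop :=
  B.Nonempty ∧ ↑B ⊆ A ∧ ∀ α ∈ A, ¬ Dom α (vee B)


/-- `B` is strongly neighborly in `A`: `B` is a nonempty finite subset of `A` and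
every nonempty finite `B' ⊆ A` with `∨B' = ∨B` equals `B`. -/
def StronglyNeighborly {n : ℕ} (A : Set (Fin n → ℤ)) (B : Finset (Fin n → ℤ)) : Prop :=
  B.Nonempty ∧ ↑B ⊆ A ∧
    ∀ B' : Finset (Fin n → ℤ), B'.Nonempty → ↑B' ⊆ A → vee B' = vee B → B' = B


/-- `A ⊆ ℤⁿ` is generic: for every `η ∈ ℤⁿ` such that no `α ∈ A` satisfies `α ≪ η`,
and every coordinate `i`, at most one `α ∈ A` has `α ≤ η` and `α i = η i`. -/
def Generic {n : ℕ} (A : Set (Fin n → ℤ)) : Prop :=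
  ∀ η : Fin n → ℤ, (∀ α ∈ A, ¬ Dom α η) →
    ∀ i : Fin n, ∀ α ∈ A, ∀ β ∈ A,
      α ≤ η → α i = η i → β ≤ η → β i = η i → α = β


/-- An antichain lattice: a subgroup of `ℤⁿ` no two distinct elements of which are
comparable in the componentwise order. -/
def IsAntichainLattice {n : ℕ} (Λ : AddSubgroup (Fin n → ℤ)) : Prop :=
  ∀ a ∈ Λ, ∀ b ∈ Λ, a ≤ b → a = b

/-- The fiber of `Λ` over `u`: `(u + Λ) ∩ ℕⁿ`. -/
def fiber {n : ℕ} (Λ : AddSubgroup (Fin n → ℤ)) (u : Fin n → ℤ) : Set (Fin n → ℤ) :=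
  {v | (∀ i, 0 ≤ v i) ∧ v - u ∈ Λ}

/-- A Markov basis of `Λ`: a finite subset `B ⊆ Λ` such that for every `u ∈ ℕⁿ`
the graph on the fiber `(u + Λ) ∩ ℕⁿ`, with edges between `v` and `w` whenever
`v - w ∈ B ∪ (-B)`, is connected. -/
def IsMarkovBasis {n : ℕ} (Λ : AddSubgroup (Fin n → ℤ)) (B : Finset (Fin n → ℤ)) : Prop :=
  ↑B ⊆ (Λ : Set (Fin n → ℤ)) ∧
    ∀ u : Fin n → ℤ, (∀ i, 0 ≤ u i) →
      ∀ v ∈ fiber Λ u, ∀ w ∈ fiber Λ u,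
        Relation.ReflTransGen
          (fun x y => x ∈ fiber Λ u ∧ y ∈ fiber Λ u ∧ (x - y ∈ B ∨ y - x ∈ B)) v w

/-- A minimal Markov basis: a Markov basis no proper subset of which is a Markov basis. -/
def IsMinimalMarkovBasis {n : ℕ} (Λ : AddSubgroup (Fin n → ℤ)) (B : Finset (Fin n → ℤ)) : Prop :=
  IsMarkovBasis Λ B ∧ ∀ B' : Finset (Fin n → ℤ), B' ⊂ B → ¬ IsMarkovBasis Λ B'

/-- `A ⊆ ℤⁿ` is `Λ`-finite: `A = A₀ + Λ` for a finite `A₀ ⊆ A` whose elements lie in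
pairwise distinct cosets of `Λ`. -/
def LambdaFinite {n : ℕ} (Λ : AddSubgroup (Fin n → ℤ)) (A : Set (Fin n → ℤ)) : Prop :=
  ∃ A₀ : Finset (Fin n → ℤ), ↑A₀ ⊆ A ∧
    A = {x : Fin n → ℤ | ∃ a ∈ A₀, ∃ l ∈ Λ, x = a + l} ∧
    ∀ a ∈ A₀, ∀ b ∈ A₀, a - b ∈ Λ → a = b

open scoped Pointwise

/-- `E_t(α) = (t^{α₁}, …, t^{αₙ}) ∈ ℝⁿ`. -/
noncomputable def Et {n : ℕ} (t : ℝ) (α : Fin n → ℤ) : Fin n → ℝ := fun i => t ^ (α i)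

/-- The polyhedron `P_t(A) = conv(E_t(A)) + [0,∞)ⁿ`. -/
noncomputable def Pt {n : ℕ} (t : ℝ) (A : Set (Fin n → ℤ)) : Set (Fin n → ℝ) :=
  convexHull ℝ (Et t '' A) + {x : Fin n → ℝ | ∀ i, 0 ≤ x i}

/-- `F` is an exposed face of `C`: `F` is the set of points of `C` maximizing some
linear functional `l` over `C`. -/
def IsExposedFace {n : ℕ} (C F : Set (Fin n → ℝ)) : Prop :=
  ∃ l : (Fin n → ℝ) →ₗ[ℝ] ℝ, F = {x ∈ C | ∀ y ∈ C, l y ≤ l x}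

/-!
Write the functional exposing `F` as `l x = ∑ cᵢ xᵢ`. Since `P_t(A)` is an upper set and `l` is
bounded above on it, `c ≤ 0`; since `F` is proper, `c ≠ 0`, so the maximum `m` of `l` is negative.
Evaluating `l` at the point `E_t(β)` of `F` for which `βᵢ = (∨σ)ᵢ` gives `m ≤ t^{(∨σ)ᵢ} cᵢ`.
If `α ≪ ∨σ`, every term of `l (E_t α)` is then at least `m / t`, so `l (E_t α) ≥ n m / t > m` as
soon as `t > n`, contradicting the maximality of `m`.
-/

lemma LinearMap.apply_eq_sum_mul_apply_single {ι : Type*} [Fintype ι] [DecidableEq ι]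
    (l : (ι → ℝ) →ₗ[ℝ] ℝ) (x : ι → ℝ) : l x = ∑ i, x i * l (Pi.single i 1) := by
  rw [l.pi_apply_eq_sum_univ x]
  refine Finset.sum_congr rfl fun i _ => ?_
  rw [smul_eq_mul]
  congr 2 with j
  simp [Pi.single_apply, eq_comm]

lemma LinearMap.apply_single_nonpos_of_isUpperSet {ι : Type*} [DecidableEq ι]
    {C : Set (ι → ℝ)} (hC : IsUpperSet C) (l : (ι → ℝ) →ₗ[ℝ] ℝ) {x : ι → ℝ} (hx : x ∈ C)
    (hmax : ∀ y ∈ C, l y ≤ l x) (i : ι) : l (Pi.single i 1) ≤ 0 := by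
  have hi : (0 : ι → ℝ) ≤ Pi.single i 1 := Pi.single_nonneg.2 zero_le_one
  have := hmax _ (hC (le_add_of_nonneg_right hi) hx)
  rw [map_add] at this
  linarith

lemma LinearMap.exists_apply_single_ne_zero {ι : Type*} [Fintype ι] [DecidableEq ι]
    {l : (ι → ℝ) →ₗ[ℝ] ℝ} (hl : l ≠ 0) : ∃ i, l (Pi.single i 1) ≠ 0 := by
  contrapose! hl
  ext i
  exact hl i

lemma sum_mul_le_mul_of_nonpos {ι : Type*} [Fintype ι] {w c : ι → ℝ} (hw : 0 ≤ w) (hc : c ≤ 0)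
    (i : ι) : ∑ j, w j * c j ≤ w i * c i := by
  classical
  rw [← Finset.add_sum_erase _ _ (Finset.mem_univ i)]
  have : ∑ j ∈ Finset.univ.erase i, w j * c j ≤ 0 :=
    Finset.sum_nonpos fun j _ => mul_nonpos_of_nonneg_of_nonpos (hw j) (hc j)
  linarith

lemma sum_mul_neg_of_pos_of_nonpos {ι : Type*} [Fintype ι] {w c : ι → ℝ} (hw : ∀ j, 0 < w j)
    (hc : c ≤ 0) {i : ι} (hi : c i < 0) : ∑ j, w j * c j < 0 :=
  (sum_mul_le_mul_of_nonpos (fun j => (hw j).le) hc i).trans_lt (mul_neg_of_pos_of_neg (hw i) hi)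

lemma isUpperSet_Pt {n : ℕ} (t : ℝ) (A : Set (Fin n → ℤ)) : IsUpperSet (Pt t A) :=
  IsUpperSet.add_left (isUpperSet_Ici (0 : Fin n → ℝ))

lemma Et_mem_Pt {n : ℕ} {t : ℝ} {A : Set (Fin n → ℤ)} {α : Fin n → ℤ} (hα : α ∈ A) :
    Et t α ∈ Pt t A :=
  ⟨Et t α, subset_convexHull ℝ _ ⟨α, hα, rfl⟩, 0, fun _ => le_rfl, add_zero _⟩

lemma exists_mem_vee_eq {n : ℕ} {σ : Finset (Fin n → ℤ)} (hσ : σ.Nonempty) (i : Fin n) :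
    ∃ β ∈ σ, vee σ i = β i := by
  obtain ⟨b, hb⟩ := Finset.max_of_nonempty (hσ.image fun β => β i)
  obtain ⟨β, hβ, rfl⟩ := Finset.mem_image.mp (Finset.mem_of_max hb)
  exact ⟨β, hβ, by rw [vee, hb]; rfl⟩

lemma Et_pos {n : ℕ} {t : ℝ} (ht : 0 < t) (α : Fin n → ℤ) (i : Fin n) : 0 < Et t α i :=
  zpow_pos ht _

lemma le_zpow_vee_mul {n : ℕ} {t m : ℝ} (ht : 0 < t) {c : Fin n → ℝ} (hc : c ≤ 0)
    {σ : Finset (Fin n → ℤ)} (hσ : σ.Nonempty) (hm : ∀ β ∈ σ, m ≤ ∑ j, t ^ β j * c j) (i : Fin n) :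
    m ≤ t ^ vee σ i * c i := by
  obtain ⟨β, hβ, hβi⟩ := exists_mem_vee_eq hσ i
  rw [hβi]
  exact (hm β hβ).trans (sum_mul_le_mul_of_nonpos (fun j => (Et_pos ht β j).le) hc i)

/-- Each term `t ^ αᵢ * cᵢ` is at least `m / t`, and `n * (m / t) > m` because `t > n`. -/
lemma lt_sum_zpow_mul_of_dom {n : ℕ} {t m : ℝ} (ht : 1 ≤ t) (htn : (n : ℝ) < t) (hm : m < 0)
    {c : Fin n → ℝ} (hc : c ≤ 0) {η α : Fin n → ℤ} (hη : ∀ i, m ≤ t ^ η i * c i)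
    (hα : Dom α η) : m < ∑ i, t ^ α i * c i := by
  have ht0 : 0 < t := zero_lt_one.trans_le ht
  have hterm : ∀ i, m / t ≤ t ^ α i * c i := fun i =>
    calc m / t ≤ t ^ η i * c i / t := div_le_div_of_nonneg_right (hη i) ht0.le
      _ = t ^ (η i - 1) * c i := by rw [zpow_sub_one₀ ht0.ne']; ring
      _ ≤ t ^ α i * c i :=
        mul_le_mul_of_nonpos_right (zpow_le_zpow_right₀ ht (by linarith [hα i])) (hc i)
  calc m < n * (m / t) := by
        rw [mul_div_assoc', lt_div_iff₀ ht0]; nlinarith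
    _ = ∑ _i : Fin n, m / t := by simp
    _ ≤ ∑ i, t ^ α i * c i := Finset.sum_le_sum fun i _ => hterm i

theorem stmt16_general {n : ℕ} (A : Set (Fin n → ℤ)) :
    ∃ T : ℝ, 1 < T ∧ ∀ t : ℝ, T ≤ t →
      ∀ F : Set (Fin n → ℝ), IsExposedFace (Pt t A) F → F.Nonempty → F ≠ Pt t A →
        ∀ σ : Finset (Fin n → ℤ),
          (↑σ : Set (Fin n → ℤ)) = {α : Fin n → ℤ | α ∈ A ∧ Et t α ∈ F} →
          σ.Nonempty →
          ∀ α ∈ A, ∃ j : Fin n, vee σ j ≤ α j := by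
  refine ⟨n + 2, by linarith [n.cast_nonneg (α := ℝ)], fun t ht F ⟨l, hF⟩ _ hFC σ hσ hσne α hα => ?_⟩
  have ht1 : 1 ≤ t := by linarith [n.cast_nonneg (α := ℝ)]
  have hσF : ∀ β ∈ σ, β ∈ A ∧ ∀ y ∈ Pt t A, l y ≤ l (Et t β) := fun β hβ => by
    have hβ' : β ∈ {α | α ∈ A ∧ Et t α ∈ F} := hσ ▸ Finset.mem_coe.2 hβ
    rw [Set.mem_ofPred_eq, hF] at hβ'
    exact ⟨hβ'.1, hβ'.2.2⟩
  obtain ⟨β₀, hβ₀⟩ := hσne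
  obtain ⟨hβ₀A, hmax⟩ := hσF β₀ hβ₀
  set c : Fin n → ℝ := fun i => l (Pi.single i 1)
  have hl : ∀ γ, l (Et t γ) = ∑ i, t ^ γ i * c i := fun γ => l.apply_eq_sum_mul_apply_single _
  have hc : c ≤ 0 :=
    l.apply_single_nonpos_of_isUpperSet (isUpperSet_Pt t A) (Et_mem_Pt hβ₀A) hmax
  obtain ⟨i, hi⟩ := LinearMap.exists_apply_single_ne_zero (l := l) <| by
    rintro rfl
    exact hFC (by simp [hF])
  have hm : l (Et t β₀) < 0 :=
    hl β₀ ▸ sum_mul_neg_of_pos_of_nonpos (Et_pos (by linarith) β₀) hc ((hc i).lt_of_ne hi)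
  have hvee : ∀ j, l (Et t β₀) ≤ t ^ vee σ j * c j := le_zpow_vee_mul (by linarith) hc ⟨β₀, hβ₀⟩
    fun β hβ => hl β ▸ (hσF β hβ).2 _ (Et_mem_Pt hβ₀A)
  by_contra! hdom
  exact (hmax _ (Et_mem_Pt hα)).not_gt
    (hl α ▸ lt_sum_zpow_mul_of_dom ht1 (by linarith) hm hc hvee hdom)

theorem stmt16 {n : ℕ} (Λ : AddSubgroup (Fin n → ℤ)) (hΛ : IsAntichainLattice Λ)
    (A : Set (Fin n → ℤ)) (hA : LambdaFinite Λ A) (hgen : Generic A) :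
    ∃ T : ℝ, 1 < T ∧ ∀ t : ℝ, T ≤ t →
      ∀ F : Set (Fin n → ℝ), IsExposedFace (Pt t A) F → F.Nonempty → F ≠ Pt t A →
        ∀ σ : Finset (Fin n → ℤ),
          (↑σ : Set (Fin n → ℤ)) = {α : Fin n → ℤ | α ∈ A ∧ Et t α ∈ F} →
          σ.Nonempty →
          ∀ α ∈ A, ∃ j : Fin n, vee σ j ≤ α j :=
  stmt16_general A
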